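/- arXiv:2210.02687 — 5 statements merged into one kernel-verified Lean document; each statement's English description precedes it below -/
import Mathlib

section
/- If D is an odd-dominating set of a finite graph G, then G admits an odd-sum coloring using at most χ(G[D]) + χ(G[V∖D]) colors: color G[D] properly with the odd numbers 1, 3, …, 2χ(G[D])−1 and color G[V∖D] properly with the even numbers 2, 4, …, 2χ(G[V∖D]); the resulting coloring is proper and every closed neighborhood has odd color sum. -/
open SimpleGraph Finset
open scoped Classical

/-- The closed neighborhood `N[v]` of a vertex `v`. -/
def closedNbhd {V : Type*} (G : SimpleGraph V) (v : V) : Set V :=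
  insert v (G.neighborSet v)

/-- `D` is an odd-dominating set: `|N[v] ∩ D|` is odd for every vertex `v`. -/
def OddDomSet {V : Type*} (G : SimpleGraph V) (D : Set V) : Prop :=
  ∀ v, Odd ((closedNbhd G v ∩ D).ncard)

/-- `f` is an odd-sum coloring: a proper coloring with positive integer colors
such that the sum of colors over each closed neighborhood is odd. -/
def IsOddSumColoring {V : Type*} [Fintype V] (G : SimpleGraph V) (f : V → ℕ) : Prop :=
  (∀ v, 0 < f v) ∧ (∀ ⦃a b⦄, G.Adj a b → f a ≠ f b) ∧
  (∀ v, Odd (∑ w ∈ (closedNbhd G v).toFinset, f w))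

/-- The odd-sum chromatic number: minimum number of colors used in an odd-sum coloring. -/
noncomputable def chiOS {V : Type*} [Fintype V] (G : SimpleGraph V) : ℕ :=
  sInf {n | ∃ f : V → ℕ, IsOddSumColoring G f ∧ (Finset.univ.image f).card = n}

/-! Once exactly the vertices of `D` carry odd colours, the parity of `∑_{w ∈ N[v]} f w` is that
of `|N[v] ∩ D|`. Colours of different parity never clash, so only the two induced graphs need
proper colourings. -/

namespace SimpleGraph

variable {V α β : Type*} {G : SimpleGraph V} {D : Set V}

noncomputable def Coloring.piecewise (C₁ : (G.induce D).Coloring α)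
    (C₂ : (G.induce Dᶜ).Coloring β) : G.Coloring (α ⊕ β) :=
  Coloring.mk (fun v => if h : v ∈ D then .inl (C₁ ⟨v, h⟩) else .inr (C₂ ⟨v, h⟩)) <| by
    intro a b hab
    by_cases ha : a ∈ D <;> by_cases hb : b ∈ D <;> simp only [ha, hb, dite_true, dite_false,
      ne_eq, Sum.inl.injEq, Sum.inr.injEq, reduceCtorEq, not_false_eq_true]
    · exact C₁.valid (by simpa using hab)
    · exact C₂.valid (by simpa using hab)

theorem Coloring.isLeft_piecewise_iff (C₁ : (G.induce D).Coloring α)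
    (C₂ : (G.induce Dᶜ).Coloring β) (v : V) : (C₁.piecewise C₂ v).isLeft ↔ v ∈ D := by
  by_cases h : v ∈ D <;> simp [Coloring.piecewise, Coloring.mk, h]

theorem natCast_toNat_chromaticNumber [Finite V] (G : SimpleGraph V) :
    (G.chromaticNumber.toNat : ℕ∞) = G.chromaticNumber :=
  ENat.natCast_toNat <|
    chromaticNumber_ne_top_iff_exists.mpr ⟨_, G.colorable_chromaticNumber_of_fintype⟩

end SimpleGraph

def oddEvenLabel {m n : ℕ} : Fin m ⊕ Fin n → ℕ :=
  Sum.elim (fun i => 2 * i + 1) (fun j => 2 * j + 2)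

theorem oddEvenLabel_injective {m n : ℕ} : Function.Injective (@oddEvenLabel m n) := by
  rintro (i | j) (i' | j') h <;> simp only [oddEvenLabel, Sum.elim_inl, Sum.elim_inr] at h <;>
    first | omega | simp [Fin.ext_iff]; omega

theorem oddEvenLabel_pos {m n : ℕ} (x : Fin m ⊕ Fin n) : 0 < oddEvenLabel x := by
  rcases x with i | j <;> simp [oddEvenLabel]

theorem odd_oddEvenLabel_iff {m n : ℕ} (x : Fin m ⊕ Fin n) : Odd (oddEvenLabel x) ↔ x.isLeft := by
  rcases x with i | j <;> simp [oddEvenLabel, Nat.odd_add_one, parity_simps]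

theorem odd_sum_closedNbhd {V : Type*} [Fintype V] {G : SimpleGraph V} {D : Set V}
    (hD : OddDomSet G D) {f : V → ℕ} (hf : ∀ w, Odd (f w) ↔ w ∈ D) (v : V) :
    Odd (∑ w ∈ (closedNbhd G v).toFinset, f w) := by
  rw [Finset.odd_sum_iff_odd_card_odd]
  convert hD v using 1
  rw [Set.ncard_eq_toFinset_card']
  congr 1
  ext w
  simp [hf]

theorem isOddSumColoring_oddEvenLabel_comp {V : Type*} [Fintype V] {G : SimpleGraph V}
    {D : Set V} (hD : OddDomSet G D) {m n : ℕ} (C : G.Coloring (Fin m ⊕ Fin n))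
    (hC : ∀ v, (C v).isLeft ↔ v ∈ D) : IsOddSumColoring G (oddEvenLabel ∘ C) :=
  ⟨fun v => oddEvenLabel_pos (C v), fun _ _ hab => oddEvenLabel_injective.ne (C.valid hab),
    odd_sum_closedNbhd hD fun w => (odd_oddEvenLabel_iff (C w)).trans (hC w)⟩

theorem card_image_comp_le_card {α β γ : Type*} [Fintype β] [DecidableEq β] [DecidableEq γ]
    (s : Finset α) (g : β → γ) (h : α → β) : #(s.image (g ∘ h)) ≤ Fintype.card β := by
  rw [← image_image]
  exact card_image_le.trans (card_le_univ _)

theorem oddSum_coloring_from_oddDominating {V : Type*} [Fintype V]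
    (G : SimpleGraph V) (D : Set V) (hD : OddDomSet G D) :
    ∃ f : V → ℕ, IsOddSumColoring G f ∧
      ((Finset.univ.image f).card : ℕ∞) ≤
        (G.induce D).chromaticNumber + (G.induce Dᶜ).chromaticNumber := by
  obtain ⟨C₁⟩ := (G.induce D).colorable_chromaticNumber_of_fintype
  obtain ⟨C₂⟩ := (G.induce Dᶜ).colorable_chromaticNumber_of_fintype
  refine ⟨oddEvenLabel ∘ C₁.piecewise C₂,
    isOddSumColoring_oddEvenLabel_comp hD _ (C₁.isLeft_piecewise_iff C₂), ?_⟩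
  calc (#(univ.image (oddEvenLabel ∘ C₁.piecewise C₂)) : ℕ∞)
      ≤ (Fintype.card (Fin (G.induce D).chromaticNumber.toNat ⊕
          Fin (G.induce Dᶜ).chromaticNumber.toNat) : ℕ) := by
        exact_mod_cast card_image_comp_le_card univ oddEvenLabel (C₁.piecewise C₂)
    _ = (G.induce D).chromaticNumber + (G.induce Dᶜ).chromaticNumber := by
        simp only [Fintype.card_sum, Fintype.card_fin, Nat.cast_add, natCast_toNat_chromaticNumber]
end

section
/- For every finite graph G that has at least one odd-dominating set, the odd-sum chromatic number of G equals the minimum over all odd-dominating sets D of χ(G[D]) + χ(G[V∖D]). -/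
open SimpleGraph Finset
open scoped Classical

section Aux

variable {V : Type*} [Fintype V] (G : SimpleGraph V)

lemma odd_sum_iff_card (s : Finset V) (f : V → ℕ) :
    Odd (∑ w ∈ s, f w) ↔ Odd ((s.filter fun w => Odd (f w)).card) := by
  have h : ∀ w ∈ s, f w % 2 = (if Odd (f w) then 1 else 0) := by
    intro w _
    by_cases hw : Odd (f w)
    · rw [if_pos hw]; rw [Nat.odd_iff] at hw; omega
    · rw [if_neg hw]; rw [Nat.odd_iff] at hw; omega
  rw [Nat.odd_iff, Nat.odd_iff, Finset.card_filter, Finset.sum_nat_mod s 2 f,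
      Finset.sum_congr rfl h]

lemma ncard_inter_eq (D : Set V) (v : V) :
    (closedNbhd G v ∩ D).ncard
      = ((closedNbhd G v).toFinset.filter fun w => w ∈ D).card := by
  rw [Set.ncard_eq_toFinset_card']
  congr 1
  ext w
  simp

/-- Upper bound construction: from an odd-dominating set we get an odd-sum coloring. -/
lemma exists_coloring_of_oddDom (D : Set V) (hD : OddDomSet G D) :
    ∃ f : V → ℕ, IsOddSumColoring G f ∧
      ((Finset.univ.image f).card : ℕ∞)
        ≤ (G.induce D).chromaticNumber + (G.induce Dᶜ).chromaticNumber := by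
  set a := (G.induce D).chromaticNumber.toNat with ha
  set b := (G.induce Dᶜ).chromaticNumber.toNat with hb
  have hca : (G.induce D).Colorable a := colorable_chromaticNumber_of_fintype _
  have hcb : (G.induce Dᶜ).Colorable b := colorable_chromaticNumber_of_fintype _
  have hnea : (G.induce D).chromaticNumber ≠ ⊤ :=
    chromaticNumber_ne_top_iff_exists.mpr ⟨a, hca⟩
  have hneb : (G.induce Dᶜ).chromaticNumber ≠ ⊤ :=
    chromaticNumber_ne_top_iff_exists.mpr ⟨b, hcb⟩
  obtain ⟨cD⟩ := hca
  obtain ⟨cC⟩ := hcb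
  set f : V → ℕ := fun v =>
    if hv : v ∈ D then 2 * (cD ⟨v, hv⟩).val + 1 else 2 * (cC ⟨v, hv⟩).val + 2 with hf
  have hfodd : ∀ v, Odd (f v) ↔ v ∈ D := by
    intro v
    by_cases hv : v ∈ D
    · simp only [hf, dif_pos hv, hv, iff_true, Nat.odd_iff]; omega
    · simp only [hf, dif_neg hv, hv, iff_false, Nat.odd_iff]; omega
  refine ⟨f, ⟨?_, ?_, ?_⟩, ?_⟩
  · intro v
    by_cases hv : v ∈ D
    · simp only [hf, dif_pos hv]; omega
    · simp only [hf, dif_neg hv]; omega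
  · intro u w hadj heq
    by_cases hu : u ∈ D <;> by_cases hw : w ∈ D
    · have hne : cD ⟨u, hu⟩ ≠ cD ⟨w, hw⟩ := cD.valid (by simpa using hadj)
      simp only [hf, dif_pos hu, dif_pos hw] at heq
      exact hne (Fin.val_injective (by omega))
    · simp only [hf, dif_pos hu, dif_neg hw] at heq; omega
    · simp only [hf, dif_neg hu, dif_pos hw] at heq; omega
    · have hne : cC ⟨u, hu⟩ ≠ cC ⟨w, hw⟩ := cC.valid (by simpa using hadj)
      simp only [hf, dif_neg hu, dif_neg hw] at heq
      exact hne (Fin.val_injective (by omega))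
  · intro v
    rw [odd_sum_iff_card]
    have hset : ((closedNbhd G v).toFinset.filter fun w => Odd (f w))
        = ((closedNbhd G v).toFinset.filter fun w => w ∈ D) := by
      apply Finset.filter_congr
      intro w _
      simp [hfodd w]
    rw [hset, ← ncard_inter_eq]
    exact hD v
  · have himg : Finset.univ.image f ⊆
        ((Finset.range a).image fun k => 2 * k + 1)
          ∪ ((Finset.range b).image fun k => 2 * k + 2) := by
      intro n hn
      simp only [Finset.mem_image, Finset.mem_univ, true_and] at hn
      obtain ⟨v, rfl⟩ := hn
      simp only [Finset.mem_union, Finset.mem_image, Finset.mem_range]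
      by_cases hv : v ∈ D
      · exact Or.inl ⟨(cD ⟨v, hv⟩).val, (cD ⟨v, hv⟩).isLt, by simp [hf, dif_pos hv]⟩
      · exact Or.inr ⟨(cC ⟨v, hv⟩).val, (cC ⟨v, hv⟩).isLt, by simp [hf, dif_neg hv]⟩
    have hcard : (Finset.univ.image f).card ≤ a + b := by
      calc (Finset.univ.image f).card
          ≤ (((Finset.range a).image fun k => 2 * k + 1)
              ∪ ((Finset.range b).image fun k => 2 * k + 2)).card :=
            Finset.card_le_card himg
        _ ≤ ((Finset.range a).image fun k => 2 * k + 1).card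
              + ((Finset.range b).image fun k => 2 * k + 2).card :=
            Finset.card_union_le _ _
        _ ≤ a + b := by
            gcongr
            · exact le_trans Finset.card_image_le (le_of_eq (Finset.card_range a))
            · exact le_trans Finset.card_image_le (le_of_eq (Finset.card_range b))
    calc ((Finset.univ.image f).card : ℕ∞) ≤ ((a + b : ℕ) : ℕ∞) := by
          exact_mod_cast hcard
      _ = (a : ℕ∞) + (b : ℕ∞) := by push_cast; rfl
      _ = (G.induce D).chromaticNumber + (G.induce Dᶜ).chromaticNumber := by
          rw [ha, hb, ENat.coe_toNat hnea, ENat.coe_toNat hneb]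

/-- Lower bound: every odd-sum coloring yields an odd-dominating set whose
chromatic decomposition is at most the number of colors used. -/
lemma oddDom_of_coloring (f : V → ℕ) (hf : IsOddSumColoring G f) :
    ∃ D : Set V, OddDomSet G D ∧
      (G.induce D).chromaticNumber + (G.induce Dᶜ).chromaticNumber
        ≤ ((Finset.univ.image f).card : ℕ∞) := by
  set D : Set V := {v | Odd (f v)} with hDdef
  have hmemD : ∀ v, v ∈ D ↔ Odd (f v) := fun v => Iff.rfl
  refine ⟨D, ?_, ?_⟩
  · intro v
    rw [ncard_inter_eq]
    have h1 := (odd_sum_iff_card (closedNbhd G v).toFinset f).mp (hf.2.2 v)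
    convert h1 using 2
    ext w
    simp [hDdef]
  · set A : Finset ℕ := (Finset.univ.image f).filter (fun n => Odd n) with hA
    set B : Finset ℕ := (Finset.univ.image f).filter (fun n => ¬ Odd n) with hB
    have cA : (G.induce D).Coloring ↥A :=
      Coloring.mk
        (fun v => ⟨f v.val, by
          rw [hA, Finset.mem_filter]
          exact ⟨Finset.mem_image_of_mem f (Finset.mem_univ v.val), v.2⟩⟩)
        (by
          intro u w hadj heq
          exact hf.2.1 (by simpa using hadj) (congrArg Subtype.val heq))
    have cB : (G.induce Dᶜ).Coloring ↥B :=
      Coloring.mk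
        (fun v => ⟨f v.val, by
          rw [hB, Finset.mem_filter]
          exact ⟨Finset.mem_image_of_mem f (Finset.mem_univ v.val), v.2⟩⟩)
        (by
          intro u w hadj heq
          exact hf.2.1 (by simpa using hadj) (congrArg Subtype.val heq))
    have h1 : (G.induce D).chromaticNumber ≤ (A.card : ℕ∞) := by
      simpa using cA.colorable.chromaticNumber_le
    have h2 : (G.induce Dᶜ).chromaticNumber ≤ (B.card : ℕ∞) := by
      simpa using cB.colorable.chromaticNumber_le
    have hsum : A.card + B.card = (Finset.univ.image f).card :=
      Finset.card_filter_add_card_filter_not _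
    calc (G.induce D).chromaticNumber + (G.induce Dᶜ).chromaticNumber
        ≤ (A.card : ℕ∞) + (B.card : ℕ∞) := add_le_add h1 h2
      _ = ((A.card + B.card : ℕ) : ℕ∞) := by push_cast; rfl
      _ = _ := by rw [hsum]

end Aux

theorem chiOS_eq_min_over_oddDominating {V : Type*} [Fintype V]
    (G : SimpleGraph V) (h : ∃ D : Set V, OddDomSet G D) :
    (chiOS G : ℕ∞) =
      sInf {x : ℕ∞ | ∃ D : Set V, OddDomSet G D ∧
        x = (G.induce D).chromaticNumber + (G.induce Dᶜ).chromaticNumber} := by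
  obtain ⟨D0, hD0⟩ := h
  obtain ⟨f0, hf0, _⟩ := exists_coloring_of_oddDom G D0 hD0
  have hne : {n | ∃ f : V → ℕ, IsOddSumColoring G f
      ∧ (Finset.univ.image f).card = n}.Nonempty := ⟨_, f0, hf0, rfl⟩
  apply le_antisymm
  · apply le_sInf
    rintro x ⟨D, hD, rfl⟩
    obtain ⟨f, hf, hle⟩ := exists_coloring_of_oddDom G D hD
    have h1 : chiOS G ≤ (Finset.univ.image f).card := Nat.sInf_le ⟨f, hf, rfl⟩
    exact le_trans (by exact_mod_cast h1) hle
  · obtain ⟨f, hf, hcard⟩ := Nat.sInf_mem hne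
    obtain ⟨D, hD, hle⟩ := oddDom_of_coloring G f hf
    have h1 : sInf {x : ℕ∞ | ∃ D : Set V, OddDomSet G D ∧
        x = (G.induce D).chromaticNumber + (G.induce Dᶜ).chromaticNumber}
        ≤ ((Finset.univ.image f).card : ℕ∞) :=
      le_trans (sInf_le ⟨D, hD, rfl⟩) hle
    rw [hcard] at h1
    exact h1
end

section
/- Every finite graph G that admits an odd-dominating set satisfies χ_os(G) ≤ 2·χ(G), where χ_os is the odd-sum chromatic number. -/
open SimpleGraph Finset
open scoped Classical

theorem chiOS_le_two_mul_chromaticNumber {V : Type*} [Fintype V]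
    (G : SimpleGraph V) (h : ∃ D : Set V, OddDomSet G D) :
    (chiOS G : ℕ∞) ≤ 2 * G.chromaticNumber := by
  obtain ⟨D, hD⟩ := h
  set n : ℕ := ENat.toNat G.chromaticNumber with hn
  have hcol : G.Colorable n := G.colorable_chromaticNumber_of_fintype
  obtain ⟨C⟩ := hcol
  have hchi : G.chromaticNumber = (n : ℕ∞) := by
    rw [hn, ENat.coe_toNat]
    exact chromaticNumber_ne_top_iff_exists.mpr ⟨n, ⟨C⟩⟩
  set f : V → ℕ := fun v => 2 * (C v : ℕ) + (if v ∈ D then 1 else 2) with hf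
  have hIs : IsOddSumColoring G f := by
    refine ⟨fun v => by positivity, ?_, ?_⟩
    · intro a b hab hfab
      have hfa : f a = 2 * (C a : ℕ) + (if a ∈ D then 1 else 2) := rfl
      have hfb : f b = 2 * (C b : ℕ) + (if b ∈ D then 1 else 2) := rfl
      have : (C a : ℕ) = (C b : ℕ) := by
        by_cases ha : a ∈ D <;> by_cases hb : b ∈ D <;> simp [ha, hb] at hfa hfb <;> omega
      exact C.valid hab (Fin.val_injective this)
    · intro v
      have hsum : ∑ w ∈ (closedNbhd G v).toFinset, f w =
          2 * (∑ w ∈ (closedNbhd G v).toFinset, (C w : ℕ)) +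
          (∑ w ∈ (closedNbhd G v).toFinset, (if w ∈ D then 1 else 2)) := by
        rw [Finset.mul_sum, ← Finset.sum_add_distrib]
      rw [hsum]
      have hcard : ((closedNbhd G v).toFinset.filter (fun w => w ∈ D)).card
          = (closedNbhd G v ∩ D).ncard := by
        rw [Set.ncard_eq_toFinset_card']
        congr 1
        ext w
        simp [Set.mem_toFinset]
      have hite : ∑ w ∈ (closedNbhd G v).toFinset, (if w ∈ D then 1 else 2) =
          ((closedNbhd G v).toFinset.filter (fun w => w ∈ D)).card * 1 +
          ((closedNbhd G v).toFinset.filter (fun w => ¬ w ∈ D)).card * 2 := by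
        rw [Finset.sum_ite]
        simp [Finset.sum_const, mul_comm]
      rw [hite, hcard]
      obtain ⟨k, hk⟩ := hD v
      exact ⟨∑ w ∈ (closedNbhd G v).toFinset, (C w : ℕ) + k +
        ((closedNbhd G v).toFinset.filter (fun w => ¬ w ∈ D)).card, by omega⟩
  have hle : chiOS G ≤ (Finset.univ.image f).card :=
    Nat.sInf_le ⟨f, hIs, rfl⟩
  have hcardle : (Finset.univ.image f).card ≤ 2 * n := by
    have hsub : Finset.univ.image f ⊆
        Finset.univ.image (fun p : Fin n × Bool => 2 * (p.1 : ℕ) + (if p.2 then 1 else 2)) := by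
      intro x hx
      simp only [Finset.mem_image, Finset.mem_univ, true_and] at hx ⊢
      obtain ⟨v, rfl⟩ := hx
      exact ⟨(C v, decide (v ∈ D)), by by_cases hv : v ∈ D <;> simp [hf, hv]⟩
    calc (Finset.univ.image f).card ≤ _ := Finset.card_le_card hsub
      _ ≤ Fintype.card (Fin n × Bool) := Finset.card_image_le.trans (Finset.card_le_univ _)
      _ = 2 * n := by simp [mul_comm]
  have : chiOS G ≤ 2 * n := hle.trans hcardle
  calc (chiOS G : ℕ∞) ≤ ((2 * n : ℕ) : ℕ∞) := by exact_mod_cast this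
    _ = 2 * G.chromaticNumber := by rw [hchi]; push_cast; ring
end

section
/- Form the graph G_{a,b,k} from two vertices v and w by adding a internally disjoint v,w-paths of length 3k+1 and b internally disjoint v,w-paths of length 3k+2 (all paths internally disjoint from each other). If a and b are odd, and D is a subset of V(G_{a,b,k}) such that |N[x] ∩ D| is odd for every internal vertex x of the paths, then also |N[v] ∩ D| and |N[w] ∩ D| are odd. -/
open SimpleGraph Finset
open scoped Classical

/-- Vertex type of `G_{a,b,k}`: the two hub vertices `v`, `w` (left summand),
the internal vertices of the `a` paths of length `3k+1` (each with `3k` internal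
vertices), and the internal vertices of the `b` paths of length `3k+2`
(each with `3k+1` internal vertices). -/
abbrev GabkVert (a b k : ℕ) : Type :=
  (Unit ⊕ Unit) ⊕ ((Fin a × Fin (3 * k)) ⊕ (Fin b × Fin (3 * k + 1)))

/-- The graph `G_{a,b,k}`: two vertices `v` and `w` joined by `a` internally disjoint
paths of length `3k+1` and `b` internally disjoint paths of length `3k+2`. -/
def Gabk (a b k : ℕ) : SimpleGraph (GabkVert a b k) :=
  SimpleGraph.fromRel (fun x y =>
    match x, y with
    | .inl (.inl _), .inr (.inl (_, j)) => j.val = 0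
    | .inl (.inl _), .inr (.inr (_, j)) => j.val = 0
    | .inl (.inr _), .inr (.inl (_, j)) => j.val = 3 * k - 1
    | .inl (.inr _), .inr (.inr (_, j)) => j.val = 3 * k
    | .inr (.inl (i, j)), .inr (.inl (i', j')) => i = i' ∧ j.val + 1 = j'.val
    | .inr (.inr (i, j)), .inr (.inr (i', j')) => i = i' ∧ j.val + 1 = j'.val
    | _, _ => False)

/-!
Work in `ZMod 2` with the indicator `f` of `D`. At an internal vertex `x_t` of a path
`v = x_0, …, x_n = w` the hypothesis reads `f x_{t-1} + f x_t + f x_{t+1} = 1`, so `f` is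
3-periodic along every path. On a path of length `3k+1` this gives `f x_1 = f w` and
`f x_{3k} = f v`; on a path of length `3k+2` it gives `f x_1 = f x_{3k+1} = 1 - f v - f w`.
Hence `|N[v] ∩ D| ≡ f v + a f w + b (1 - f v - f w)`, which is `1` when `a` and `b` are odd,
and symmetrically for `w`.
-/

section

variable {V : Type*}

lemma odd_ncard_coe_inter_iff (S : Finset V) (D : Set V) :
    Odd ((↑S ∩ D).ncard) ↔ ∑ y ∈ S, D.indicator 1 y = (1 : ZMod 2) := by
  have hS : (↑S ∩ D : Set V) = ↑(S.filter (· ∈ D)) := by ext; simp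
  rw [← ZMod.natCast_eq_one_iff_odd, hS, Set.ncard_coe_finset, Finset.natCast_card_filter]
  simp only [Set.indicator_apply, Pi.one_apply]

lemma sum_insert_image_union_image {ι κ M : Type*} [Fintype ι] [Fintype κ] [DecidableEq V]
    [AddCommMonoid M] {x : V} {A : ι → V} {B : κ → V} (hA : A.Injective) (hB : B.Injective)
    (hAB : ∀ i j, A i ≠ B j) (hxA : ∀ i, A i ≠ x) (hxB : ∀ j, B j ≠ x) (g : V → M) :
    ∑ y ∈ insert x (univ.image A ∪ univ.image B), g y =
      g x + (∑ i, g (A i) + ∑ j, g (B j)) := by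
  rw [sum_insert (by simpa using ⟨hxA, hxB⟩),
    sum_union (disjoint_left.2 (by simpa using fun i j => (hAB i j).symm)),
    sum_image (fun i _ j _ h => hA h), sum_image (fun i _ j _ h => hB h)]

lemma three_periodic_of_consecutive_sum_eq {M : Type*} [AddCommGroup M] {s : ℕ → M} {c : M}
    {n : ℕ} (h : ∀ t, t + 2 ≤ n → s t + s (t + 1) + s (t + 2) = c) {t m : ℕ}
    (htm : t + 3 * m ≤ n) : s (t + 3 * m) = s t := by
  induction m with
  | zero => rfl
  | succ m ih =>
    set x := t + 3 * m
    have h₁ : s x + s (x + 1) + s (x + 2) = c := h x (by omega)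
    have h₂ : s (x + 1) + s (x + 2) + s (x + 3) = c := h (x + 1) (by omega)
    have key : s (x + 1) + s (x + 2) + s (x + 3) = s (x + 1) + s (x + 2) + s x := by
      rw [h₂, ← h₁]; abel
    rw [← ih (by omega)]
    exact add_left_cancel key

lemma indicator_add_add_eq_one_of_path [DecidableEq V] {G : SimpleGraph V} {D : Set V}
    {p : ℕ → V} {n t : ℕ}
    (hp : Set.InjOn p (Set.Iic n)) (ht : t + 2 ≤ n)
    (hN : closedNbhd G (p (t + 1)) = ↑({p t, p (t + 1), p (t + 2)} : Finset V))
    (hD : Odd ((closedNbhd G (p (t + 1)) ∩ D).ncard)) :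
    D.indicator 1 (p t) + D.indicator 1 (p (t + 1)) + D.indicator 1 (p (t + 2)) = (1 : ZMod 2) := by
  have hne {s u : ℕ} (hs : s ≤ n) (hu : u ≤ n) (hsu : s ≠ u) : p s ≠ p u :=
    hp.ne (Set.mem_Iic.2 hs) (Set.mem_Iic.2 hu) hsu
  rw [hN, odd_ncard_coe_inter_iff, Finset.sum_insert, Finset.sum_insert, Finset.sum_singleton]
    at hD
  · rw [add_assoc]; exact hD
  · simpa using hne (by omega) (by omega) (by omega)
  · simp [hne (by omega : t ≤ n) (by omega : t + 1 ≤ n) (by omega),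
      hne (by omega : t ≤ n) (by omega : t + 2 ≤ n) (by omega)]

end

namespace Gabk

variable {a b k : ℕ}

abbrev hubV (a b k : ℕ) : GabkVert a b k := .inl (.inl ())
abbrev hubW (a b k : ℕ) : GabkVert a b k := .inl (.inr ())

/-- `pathA i t` is the vertex at distance `t` from `v` along the `i`-th path of length `3k+1`
(and `w` beyond its end); `pathB` is the same for the paths of length `3k+2`. -/
def pathA (i : Fin a) (t : ℕ) : GabkVert a b k :=
  if t = 0 then hubV a b k
  else if h : t - 1 < 3 * k then .inr (.inl (i, ⟨t - 1, h⟩)) else hubW a b k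

def pathB (i : Fin b) (t : ℕ) : GabkVert a b k :=
  if t = 0 then hubV a b k
  else if h : t - 1 < 3 * k + 1 then .inr (.inr (i, ⟨t - 1, h⟩)) else hubW a b k

lemma pathA_succ (i : Fin a) (j : Fin (3 * k)) :
    (pathA i (j + 1) : GabkVert a b k) = .inr (.inl (i, j)) := by
  simp [pathA, j.isLt]

lemma pathB_succ (i : Fin b) (j : Fin (3 * k + 1)) :
    (pathB i (j + 1) : GabkVert a b k) = .inr (.inr (i, j)) := by
  simp [pathB, j.isLt]

@[simp] lemma pathA_zero (i : Fin a) : (pathA i 0 : GabkVert a b k) = hubV a b k := by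
  simp [pathA]

@[simp] lemma pathB_zero (i : Fin b) : (pathB i 0 : GabkVert a b k) = hubV a b k := by
  simp [pathB]

lemma pathA_three_mul_add_one (i : Fin a) :
    (pathA i (3 * k + 1) : GabkVert a b k) = hubW a b k := by
  simp [pathA]

lemma pathB_three_mul_add_two (i : Fin b) :
    (pathB i (3 * k + 2) : GabkVert a b k) = hubW a b k := by
  simp [pathB]

lemma pathA_one (hk : 0 < k) (i : Fin a) :
    (pathA i 1 : GabkVert a b k) = .inr (.inl (i, ⟨0, by omega⟩)) :=
  pathA_succ i ⟨0, _⟩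

lemma pathB_one (hk : 0 < k) (i : Fin b) :
    (pathB i 1 : GabkVert a b k) = .inr (.inr (i, ⟨0, by omega⟩)) :=
  pathB_succ i ⟨0, _⟩

lemma pathA_three_mul (hk : 0 < k) (i : Fin a) :
    (pathA i (3 * k) : GabkVert a b k) = .inr (.inl (i, ⟨3 * k - 1, by omega⟩)) := by
  simpa [Nat.sub_add_cancel (by omega : 1 ≤ 3 * k)] using
    pathA_succ (b := b) i ⟨3 * k - 1, by omega⟩

lemma pathB_three_mul_add_one (i : Fin b) :
    (pathB i (3 * k + 1) : GabkVert a b k) = .inr (.inr (i, ⟨3 * k, by omega⟩)) :=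
  pathB_succ i ⟨3 * k, _⟩

lemma pathA_injOn (i : Fin a) :
    Set.InjOn (pathA i : ℕ → GabkVert a b k) (Set.Iic (3 * k + 1)) := by
  intro s hs t ht h
  simp only [Set.mem_Iic] at hs ht
  unfold pathA at h
  split_ifs at h <;>
    simp only [Sum.inr.injEq, Sum.inl.injEq, Prod.mk.injEq, Fin.ext_iff, reduceCtorEq, true_and]
      at h <;> omega

lemma pathB_injOn (i : Fin b) :
    Set.InjOn (pathB i : ℕ → GabkVert a b k) (Set.Iic (3 * k + 2)) := by
  intro s hs t ht h
  simp only [Set.mem_Iic] at hs ht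
  unfold pathB at h
  split_ifs at h <;>
    simp only [Sum.inr.injEq, Sum.inl.injEq, Prod.mk.injEq, Fin.ext_iff, reduceCtorEq, true_and]
      at h <;> omega

lemma closedNbhd_pathA (i : Fin a) {t : ℕ} (ht : t + 2 ≤ 3 * k + 1) :
    closedNbhd (Gabk a b k) (pathA i (t + 1)) =
      ↑({pathA i t, pathA i (t + 1), pathA i (t + 2)} : Finset (GabkVert a b k)) := by
  ext y
  simp only [closedNbhd, Gabk, Set.mem_insert_iff, mem_neighborSet, fromRel_adj, coe_insert,
    coe_singleton, Set.mem_singleton_iff]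
  unfold pathA
  rcases y with (⟨⟩|⟨⟩) | (⟨i', j⟩|⟨i', j⟩) <;> split_ifs <;>
    simp_all [Fin.ext_iff, -Fin.val_eq_zero_iff] <;> omega

lemma closedNbhd_pathB (i : Fin b) {t : ℕ} (ht : t + 2 ≤ 3 * k + 2) :
    closedNbhd (Gabk a b k) (pathB i (t + 1)) =
      ↑({pathB i t, pathB i (t + 1), pathB i (t + 2)} : Finset (GabkVert a b k)) := by
  ext y
  simp only [closedNbhd, Gabk, Set.mem_insert_iff, mem_neighborSet, fromRel_adj, coe_insert,
    coe_singleton, Set.mem_singleton_iff]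
  unfold pathB
  rcases y with (⟨⟩|⟨⟩) | (⟨i', j⟩|⟨i', j⟩) <;> split_ifs <;>
    simp_all [Fin.ext_iff, -Fin.val_eq_zero_iff] <;> omega

lemma closedNbhd_hubV (hk : 0 < k) :
    closedNbhd (Gabk a b k) (hubV a b k) = ↑(insert (hubV a b k)
      (univ.image (pathA · 1) ∪ univ.image (pathB · 1))) := by
  ext y
  rcases y with (⟨⟩|⟨⟩) | (⟨i', j⟩|⟨i', j⟩) <;>
    simp [closedNbhd, Gabk, pathA_one hk, pathB_one hk, Fin.ext_iff, -Fin.val_eq_zero_iff,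
      eq_comm]

lemma closedNbhd_hubW (hk : 0 < k) :
    closedNbhd (Gabk a b k) (hubW a b k) = ↑(insert (hubW a b k)
      (univ.image (pathA · (3 * k)) ∪ univ.image (pathB · (3 * k + 1)))) := by
  ext y
  rcases y with (⟨⟩|⟨⟩) | (⟨i', j⟩|⟨i', j⟩) <;>
    simp [closedNbhd, Gabk, pathA_three_mul hk, pathB_three_mul_add_one, Fin.ext_iff,
      -Fin.val_eq_zero_iff, eq_comm]

section

def OddAtInternal (D : Set (GabkVert a b k)) : Prop :=
  ∀ x : GabkVert a b k, (∃ y, x = Sum.inr y) → Odd ((closedNbhd (Gabk a b k) x ∩ D).ncard)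

variable {D : Set (GabkVert a b k)}

lemma indicator_pathA_add_add (hD : OddAtInternal D) (i : Fin a) (t : ℕ)
    (ht : t + 2 ≤ 3 * k + 1) :
    D.indicator 1 (pathA i t) + D.indicator 1 (pathA i (t + 1)) +
      D.indicator 1 (pathA i (t + 2)) = (1 : ZMod 2) :=
  indicator_add_add_eq_one_of_path (pathA_injOn i) ht (closedNbhd_pathA i ht)
    (hD _ ⟨_, pathA_succ i ⟨t, by omega⟩⟩)

lemma indicator_pathB_add_add (hD : OddAtInternal D) (i : Fin b) (t : ℕ)
    (ht : t + 2 ≤ 3 * k + 2) :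
    D.indicator 1 (pathB i t) + D.indicator 1 (pathB i (t + 1)) +
      D.indicator 1 (pathB i (t + 2)) = (1 : ZMod 2) :=
  indicator_add_add_eq_one_of_path (pathB_injOn i) ht (closedNbhd_pathB i ht)
    (hD _ ⟨_, pathB_succ i ⟨t, by omega⟩⟩)

lemma indicator_pathA_one (hD : OddAtInternal D) (i : Fin a) :
    D.indicator (1 : GabkVert a b k → ZMod 2) (pathA i 1) = D.indicator 1 (hubW a b k) := by
  rw [← three_periodic_of_consecutive_sum_eq (indicator_pathA_add_add hD i) (t := 1) (m := k)
    (by omega), add_comm, pathA_three_mul_add_one]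

lemma indicator_pathA_three_mul (hD : OddAtInternal D) (i : Fin a) :
    D.indicator (1 : GabkVert a b k → ZMod 2) (pathA i (3 * k)) = D.indicator 1 (hubV a b k) := by
  simpa using three_periodic_of_consecutive_sum_eq (indicator_pathA_add_add hD i)
    (t := 0) (m := k) (by omega)

lemma indicator_pathB_one (hD : OddAtInternal D) (i : Fin b) :
    D.indicator (1 : GabkVert a b k → ZMod 2) (pathB i 1) =
      1 - D.indicator 1 (hubV a b k) - D.indicator 1 (hubW a b k) := by
  have hsum := indicator_pathB_add_add hD i 0 (by omega)
  have hper := three_periodic_of_consecutive_sum_eq (indicator_pathB_add_add hD i)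
    (t := 2) (m := k) (by omega)
  rw [pathB_zero] at hsum
  rw [add_comm, pathB_three_mul_add_two] at hper
  linear_combination hsum + hper

lemma indicator_pathB_three_mul_add_one (hD : OddAtInternal D) (i : Fin b) :
    D.indicator (1 : GabkVert a b k → ZMod 2) (pathB i (3 * k + 1)) =
      1 - D.indicator 1 (hubV a b k) - D.indicator 1 (hubW a b k) := by
  rw [add_comm, three_periodic_of_consecutive_sum_eq (indicator_pathB_add_add hD i)
    (t := 1) (m := k) (by omega), indicator_pathB_one hD]

end

end Gabk

open Gabk

theorem Gabk_endpoints_odd_general (a b k : ℕ) (hk : 0 < k)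
    (haodd : Odd a) (hbodd : Odd b) (D : Set (GabkVert a b k))
    (hD : ∀ x : GabkVert a b k, (∃ y, x = Sum.inr y) →
      Odd ((closedNbhd (Gabk a b k) x ∩ D).ncard)) :
    Odd ((closedNbhd (Gabk a b k) (Sum.inl (Sum.inl ())) ∩ D).ncard) ∧
    Odd ((closedNbhd (Gabk a b k) (Sum.inl (Sum.inr ())) ∩ D).ncard) := by
  have ha : (a : ZMod 2) = 1 := ZMod.natCast_eq_one_iff_odd.2 haodd
  have hb : (b : ZMod 2) = 1 := ZMod.natCast_eq_one_iff_odd.2 hbodd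
  constructor
  · rw [closedNbhd_hubV hk, odd_ncard_coe_inter_iff, sum_insert_image_union_image]
    · simp only [indicator_pathA_one hD, indicator_pathB_one hD, sum_const, card_univ,
        Fintype.card_fin, nsmul_eq_mul, ha, hb]
      ring
    all_goals simp [pathA_one hk, pathB_one hk, Function.Injective]
  · rw [closedNbhd_hubW hk, odd_ncard_coe_inter_iff, sum_insert_image_union_image]
    · simp only [indicator_pathA_three_mul hD, indicator_pathB_three_mul_add_one hD, sum_const,
        card_univ, Fintype.card_fin, nsmul_eq_mul, ha, hb]
      ring
    all_goals simp [pathA_three_mul hk, pathB_three_mul_add_one, Function.Injective]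

theorem Gabk_endpoints_odd (a b k : ℕ) (ha : 0 < a) (hb : 0 < b) (hk : 0 < k)
    (haodd : Odd a) (hbodd : Odd b) (D : Set (GabkVert a b k))
    (hD : ∀ x : GabkVert a b k, (∃ y, x = Sum.inr y) →
      Odd ((closedNbhd (Gabk a b k) x ∩ D).ncard)) :
    Odd ((closedNbhd (Gabk a b k) (Sum.inl (Sum.inl ())) ∩ D).ncard) ∧
    Odd ((closedNbhd (Gabk a b k) (Sum.inl (Sum.inr ())) ∩ D).ncard) :=
  Gabk_endpoints_odd_general a b k hk haodd hbodd D hD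
end

section
/- For n odd, the Cartesian product K₂ □ Kₙ satisfies: its unique structure forces χ_os(K₂ □ Kₙ) = 2n. In particular, for odd n, every odd-dominating set D of K₂ □ Kₙ yields χ((K₂□Kₙ)[D]) + χ((K₂□Kₙ)[V∖D]) ≥ 2n. -/
open SimpleGraph Finset
open scoped Classical

/-
In K₂ □ Kₙ the closed neighbourhood of (i, j) is row i together with (i + 1, j). So if a function
f has odd sums over all closed neighbourhoods, comparing the sums at (i + 1, j) and (i + 1, j′)
shows that f has constant parity on each row; for odd n a row sum then has the parity of a single
entry, and the two rows get opposite parities. An odd-sum coloring is therefore injective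
(properness inside a row, parity across rows), so it uses exactly 2n colors, and 2j + i + 1 is one.
Applied to the indicator of an odd-dominating set D, the same facts say that D is one of the two
rows, so D and its complement each induce a copy of Kₙ.
-/

/-- Shared by odd-sum colorings (`f` the coloring) and odd-dominating sets (`f` the indicator). -/
def OddClosedSums {V : Type*} [Fintype V] (G : SimpleGraph V) (f : V → ℕ) : Prop :=
  ∀ v, Odd (∑ w ∈ (closedNbhd G v).toFinset, f w)

theorem OddDomSet.oddClosedSums {V : Type*} [Fintype V] {G : SimpleGraph V} {D : Set V}
    (hD : OddDomSet G D) :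
    OddClosedSums G fun w => if w ∈ D then 1 else 0 := by
  intro v
  rw [Finset.sum_boole, Nat.cast_id]
  convert hD v using 1
  rw [Set.ncard_eq_toFinset_card', Set.toFinset_inter]
  congr 1
  ext; simp

theorem chromaticNumber_le_induce_boxProd {α β : Type*} {G : SimpleGraph α}
    {H : SimpleGraph β} {S : Set (α × β)} {a : α} (hS : ∀ b, (a, b) ∈ S) :
    H.chromaticNumber ≤ ((G □ H).induce S).chromaticNumber :=
  chromaticNumber_mono_of_hom ⟨fun b => ⟨(a, b), hS b⟩, boxProd_adj_right.2⟩

theorem fin_two_add_one_add_one (i : Fin 2) : i + 1 + 1 = i := by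
  fin_cases i <;> rfl

theorem fin_two_add_one_ne (i : Fin 2) : i + 1 ≠ i := by
  fin_cases i <;> decide

theorem fin_two_eq_add_one_of_ne {i i' : Fin 2} (h : i ≠ i') : i' = i + 1 := by
  fin_cases i <;> fin_cases i' <;> simp_all

theorem closedNbhd_toFinset_boxProd {n : ℕ} (i : Fin 2) (j : Fin n) :
    (closedNbhd (completeGraph (Fin 2) □ completeGraph (Fin n)) (i, j)).toFinset =
      insert (i + 1, j) (univ.image (i, ·)) := by
  ext ⟨x, y⟩
  rw [Set.mem_toFinset]
  simp only [closedNbhd, completeGraph_eq_top, Set.mem_insert_iff, Prod.mk.injEq,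
    mem_neighborSet, boxProd_adj, top_adj, mem_insert, mem_image, mem_univ, true_and,
    exists_eq_right]
  obtain rfl | hx := eq_or_ne x i
  · simpa [eq_comm] using em (y = j)
  · simp [fin_two_eq_add_one_of_ne (Ne.symm hx), eq_comm]

section
variable {n : ℕ}

theorem sum_closedNbhd_boxProd (f : Fin 2 × Fin n → ℕ) (i : Fin 2) (j : Fin n) :
    ∑ w ∈ (closedNbhd (completeGraph (Fin 2) □ completeGraph (Fin n)) (i, j)).toFinset, f w =
      f (i + 1, j) + ∑ b, f (i, b) := by
  rw [closedNbhd_toFinset_boxProd, sum_insert, sum_image]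
  · exact fun a _ b _ h => (Prod.mk.inj h).2
  · simp only [mem_image, mem_univ, true_and, Prod.mk.injEq, not_exists, not_and]
    exact fun _ h => absurd h.symm (fin_two_add_one_ne i)

namespace OddClosedSums

variable {f : Fin 2 × Fin n → ℕ}

theorem cast_add_sum_row (hf : OddClosedSums (completeGraph (Fin 2) □ completeGraph (Fin n)) f)
    (i : Fin 2) (j : Fin n) :
    (f (i + 1, j) : ZMod 2) + ∑ b, (f (i, b) : ZMod 2) = 1 := by
  have h := (hf (i, j)).natCast_zmod_two
  rwa [sum_closedNbhd_boxProd, Nat.cast_add, Nat.cast_sum] at h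

theorem cast_row_eq (hf : OddClosedSums (completeGraph (Fin 2) □ completeGraph (Fin n)) f)
    (i : Fin 2) (j j' : Fin n) : (f (i, j) : ZMod 2) = f (i, j') := by
  have h := hf.cast_add_sum_row (i + 1) j
  have h' := hf.cast_add_sum_row (i + 1) j'
  rw [fin_two_add_one_add_one] at h h'
  linear_combination h - h'

theorem cast_add_eq_one (hf : OddClosedSums (completeGraph (Fin 2) □ completeGraph (Fin n)) f)
    (hn : Odd n) (i : Fin 2) (j : Fin n) :
    (f (i + 1, j) : ZMod 2) + f (i, j) = 1 := by
  have hrow : ∑ b, (f (i, b) : ZMod 2) = f (i, j) := by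
    rw [sum_congr rfl fun b _ => hf.cast_row_eq i b j, sum_const, card_univ, Fintype.card_fin,
      nsmul_eq_mul, hn.natCast_zmod_two, one_mul]
  rw [← hrow]
  exact hf.cast_add_sum_row i j

theorem cast_ne_of_ne (hf : OddClosedSums (completeGraph (Fin 2) □ completeGraph (Fin n)) f)
    (hn : Odd n) {i i' : Fin 2} (hi : i ≠ i') (j j' : Fin n) :
    (f (i, j) : ZMod 2) ≠ f (i', j') := by
  obtain rfl := fin_two_eq_add_one_of_ne hi
  rw [hf.cast_row_eq i j j']
  intro h
  have h1 := hf.cast_add_eq_one hn i j'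
  rw [← h, CharTwo.add_self_eq_zero] at h1
  exact zero_ne_one h1

end OddClosedSums

theorem IsOddSumColoring.injective (hn : Odd n) {f : Fin 2 × Fin n → ℕ}
    (hf : IsOddSumColoring (completeGraph (Fin 2) □ completeGraph (Fin n)) f) :
    Function.Injective f := by
  rintro ⟨i, j⟩ ⟨i', j'⟩ h
  by_cases hi : i = i'
  · subst hi
    by_contra hj
    exact hf.2.1 (boxProd_adj_right.2 (by simpa using hj)) h
  · exact absurd (congrArg Nat.cast h) (OddClosedSums.cast_ne_of_ne hf.2.2 hn hi j j')

theorem IsOddSumColoring.card_image_eq (hn : Odd n) {f : Fin 2 × Fin n → ℕ}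
    (hf : IsOddSumColoring (completeGraph (Fin 2) □ completeGraph (Fin n)) f) :
    #(univ.image f) = 2 * n := by
  rw [card_image_of_injective _ (hf.injective hn), card_univ, Fintype.card_prod,
    Fintype.card_fin, Fintype.card_fin]

theorem isOddSumColoring_boxProd (hn : Odd n) :
    IsOddSumColoring (completeGraph (Fin 2) □ completeGraph (Fin n))
      fun p => 2 * p.2 + p.1 + 1 := by
  refine ⟨fun _ => Nat.succ_pos _, ?_, ?_⟩
  · rintro ⟨i, j⟩ ⟨i', j'⟩ hadj h
    rcases boxProd_adj.1 hadj with ⟨hi, hj⟩ | ⟨hj, hi⟩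
    · exact (top_adj i i').1 hi (Fin.ext (by simp only at h hj; subst hj; omega))
    · exact (top_adj j j').1 hj (Fin.ext (by simp only at h hi; subst hi; omega))
  · rintro ⟨i, j⟩
    apply ZMod.natCast_eq_one_iff_odd.mp
    rw [sum_closedNbhd_boxProd]
    push_cast
    simp only [show (2 : ZMod 2) = 0 from rfl, zero_mul, zero_add, sum_const, card_univ,
      Fintype.card_fin, nsmul_eq_mul, hn.natCast_zmod_two, one_mul]
    fin_cases i <;> decide

theorem OddDomSet.exists_row_subset_and_row_subset_compl (hn : Odd n)
    {D : Set (Fin 2 × Fin n)}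
    (hD : OddDomSet (completeGraph (Fin 2) □ completeGraph (Fin n)) D) :
    ∃ i i' : Fin 2, (∀ j, (i, j) ∈ D) ∧ ∀ j, (i', j) ∈ Dᶜ := by
  have hcast (v w : Fin 2 × Fin n) :
      ((if v ∈ D then 1 else 0 : ℕ) : ZMod 2) = ((if w ∈ D then 1 else 0 : ℕ) : ZMod 2) ↔
        (v ∈ D ↔ w ∈ D) := by
    by_cases hv : v ∈ D <;> by_cases hw : w ∈ D <;> simp [hv, hw]
  let j₀ : Fin n := ⟨0, hn.pos⟩
  have hrow (i : Fin 2) (j : Fin n) : (i, j) ∈ D ↔ (i, j₀) ∈ D :=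
    (hcast _ _).1 (hD.oddClosedSums.cast_row_eq i j j₀)
  have hcol : ¬((0, j₀) ∈ D ↔ (1, j₀) ∈ D) :=
    mt (hcast _ _).2 (hD.oddClosedSums.cast_ne_of_ne hn (by decide) j₀ j₀)
  by_cases h0 : (0, j₀) ∈ D
  · exact ⟨0, 1, fun j => (hrow 0 j).2 h0, fun j hj => hcol (iff_of_true h0 ((hrow 1 j).1 hj))⟩
  · exact ⟨1, 0, fun j => (hrow 1 j).2 (by tauto), fun j hj => h0 ((hrow 0 j).1 hj)⟩

end

theorem chiOS_boxProd_K2_Kn (n : ℕ) (hn : Odd n) :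
    chiOS (completeGraph (Fin 2) □ completeGraph (Fin n)) = 2 * n ∧
    ∀ D : Set (Fin 2 × Fin n),
      OddDomSet (completeGraph (Fin 2) □ completeGraph (Fin n)) D →
      (2 * n : ℕ∞) ≤
        ((completeGraph (Fin 2) □ completeGraph (Fin n)).induce D).chromaticNumber +
        ((completeGraph (Fin 2) □ completeGraph (Fin n)).induce Dᶜ).chromaticNumber := by
  refine ⟨?_, fun D hD => ?_⟩
  · have hcounts : {m | ∃ f, IsOddSumColoring (completeGraph (Fin 2) □ completeGraph (Fin n)) f
        ∧ #(univ.image f) = m} = {2 * n} :=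
      Set.eq_singleton_iff_unique_mem.2
        ⟨⟨_, isOddSumColoring_boxProd hn, (isOddSumColoring_boxProd hn).card_image_eq hn⟩,
          fun _ ⟨_, hf, hm⟩ => hm ▸ hf.card_image_eq hn⟩
    rw [chiOS, hcounts, csInf_singleton]
  · obtain ⟨i, i', hi, hi'⟩ := hD.exists_row_subset_and_row_subset_compl hn
    calc (2 * n : ℕ∞)
        = (completeGraph (Fin n)).chromaticNumber + (completeGraph (Fin n)).chromaticNumber := by
          rw [completeGraph_eq_top, chromaticNumber_top, Fintype.card_fin, two_mul]
      _ ≤ _ := add_le_add (chromaticNumber_le_induce_boxProd hi)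
          (chromaticNumber_le_induce_boxProd hi')
end
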